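/- arXiv:0806.4809 — 2 statements merged into one kernel-verified Lean document; each statement's English description precedes it below -/
import Mathlib

section
/- For all integers m ≥ 0 and 1 ≤ r ≤ m, the derivative of the Chebyshev polynomial of the second kind satisfies U_m'(cos(rπ/(m+1))) = (m+1)·(-1)^{r+1} / sin²(rπ/(m+1)). -/
open Real Polynomial Polynomial.Chebyshev

/-!
Evaluating Mathlib's identity `(n + 1) T_{n+1} = X U_n - (1 - X²) U_n'` at `x = cos θ`, where
`θ = rπ/(m+1)`: there `U_m(cos θ) = 0` (since `sin((m+1)θ) = 0` while `sin θ ≠ 0`) and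
`T_{m+1}(cos θ) = cos(rπ) = (-1)^r`, so `sin² θ · U_m'(cos θ) = -(m + 1)(-1)^r`.
-/

theorem one_sub_sq_mul_eval_derivative_U {R : Type*} [CommRing R] (n : ℤ) (x : R) :
    (1 - x ^ 2) * (derivative (U R n)).eval x =
      x * (U R n).eval x - (n + 1) * (T R (n + 1)).eval x := by
  have h := congrArg (eval x) (add_one_mul_T_eq_poly_in_U (R := R) n)
  simp only [eval_mul, eval_sub, eval_add, eval_one, eval_X, eval_pow, eval_intCast] at h
  linear_combination h

theorem sin_sq_mul_eval_derivative_U_real_cos (n : ℤ) (θ : ℝ) :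
    sin θ ^ 2 * (derivative (U ℝ n)).eval (cos θ) =
      cos θ * (U ℝ n).eval (cos θ) - (n + 1) * cos ((n + 1) * θ) := by
  have h := one_sub_sq_mul_eval_derivative_U n (cos θ)
  rw [T_real_cos, Int.cast_add, Int.cast_one] at h
  rw [sin_sq, ← h]

theorem sin_nat_mul_pi_div_pos {m r : ℕ} (hr1 : 1 ≤ r) (hrm : r ≤ m) :
    0 < sin (r * π / (m + 1)) := by
  apply sin_pos_of_pos_of_lt_pi (by positivity)
  rw [div_lt_iff₀ (by positivity)]
  have : (r : ℝ) < m + 1 := by exact_mod_cast Nat.lt_succ_of_le hrm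
  nlinarith [pi_pos]

theorem eval_U_real_cos_nat_mul_pi_div {m r : ℕ} (hr1 : 1 ≤ r) (hrm : r ≤ m) :
    (U ℝ m).eval (cos (r * π / (m + 1))) = 0 := by
  have h := U_real_cos (r * π / (m + 1)) m
  rw [show ((m : ℤ) + 1 : ℝ) * (r * π / (m + 1)) = r * π by push_cast; field_simp,
    sin_nat_mul_pi] at h
  exact (mul_eq_zero.mp h).resolve_right (sin_nat_mul_pi_div_pos hr1 hrm).ne'

theorem chebyshevU_deriv_at_roots (m r : ℕ) (hr1 : 1 ≤ r) (hrm : r ≤ m) :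
    (Polynomial.derivative (Chebyshev.U ℝ (m : ℤ))).eval (Real.cos (r * π / (m + 1))) =
      (m + 1) * (-1) ^ (r + 1) / (Real.sin (r * π / (m + 1))) ^ 2 := by
  set θ : ℝ := r * π / (m + 1) with hθ
  have hsin : sin θ ^ 2 ≠ 0 := (pow_pos (sin_nat_mul_pi_div_pos hr1 hrm) 2).ne'
  have hroot : (U ℝ m).eval (cos θ) = 0 := eval_U_real_cos_nat_mul_pi_div hr1 hrm
  have hcos : cos (((m : ℤ) + 1) * θ) = (-1) ^ r := by
    rw [show ((m : ℤ) + 1 : ℝ) * θ = r * π by push_cast; rw [hθ]; field_simp, cos_nat_mul_pi]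
  have key := sin_sq_mul_eval_derivative_U_real_cos m θ
  rw [hroot, hcos] at key
  rw [eq_div_iff hsin]
  push_cast at key
  linear_combination key
end

section
/- For all integers j ≥ 0: D_4(0, 2j+2) = (3^j + 1)/2, D_4(1, 2j+1) = (3^j + 1)/2, D_4(2, 2j+2) = 3^j, D_4(3, 2j+3) = (3^{j+1} − 1)/2, and D_4(4, 2j+4) = (3^{j+1} − 1)/2. -/
/-!
On odd levels only the vertices `1` and `3` of the diagram for `k = 4` are reached, and two steps
act on `(D₄(1,n), D₄(3,n))` by the matrix `!![2, 1; 1, 2]`. Its eigenvectors `(1,1)` and `(1,-1)`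
(eigenvalues `3` and `1`) show that `D₄(1,2j+1) + D₄(3,2j+1) = 3^j` while `D₄(1,2j+1) - D₄(3,2j+1)`
stays `1`; the even levels are then one step away.
-/

/-- Number of directed paths from `(0,0)` to `(j,i)` in the Bratteli diagram for `SU(2)_k`. -/
def bratteliD (k : ℕ) : ℕ → ℕ → ℕ
  | i, 0 => if i = 0 then 1 else 0
  | i, j + 1 =>
      if i ≤ k then
        (if 1 ≤ i then bratteliD k (i - 1) j else 0) +
        (if i + 1 ≤ k then bratteliD k (i + 1) j else 0)
      else 0

section Recurrence

variable {k : ℕ}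

lemma bratteliD_zero_succ (hk : 1 ≤ k) (n : ℕ) : bratteliD k 0 (n + 1) = bratteliD k 1 n := by
  simp [bratteliD, hk]

lemma bratteliD_succ_succ {i : ℕ} (hi : i + 2 ≤ k) (n : ℕ) :
    bratteliD k (i + 1) (n + 1) = bratteliD k i n + bratteliD k (i + 2) n := by
  simp [bratteliD, hi, show i + 1 ≤ k by omega]

end Recurrence

lemma bratteliD_self_succ (k n : ℕ) : bratteliD (k + 1) (k + 1) (n + 1) = bratteliD (k + 1) k n := by
  simp [bratteliD]

lemma bratteliD_four_one_add_two (n : ℕ) :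
    bratteliD 4 1 (n + 2) = 2 * bratteliD 4 1 n + bratteliD 4 3 n := by
  rw [bratteliD_succ_succ (i := 0) (by norm_num), bratteliD_zero_succ (by norm_num),
    bratteliD_succ_succ (i := 1) (by norm_num)]
  ring

lemma bratteliD_four_three_add_two (n : ℕ) :
    bratteliD 4 3 (n + 2) = bratteliD 4 1 n + 2 * bratteliD 4 3 n := by
  rw [bratteliD_succ_succ (i := 2) (by norm_num), bratteliD_succ_succ (i := 1) (by norm_num),
    bratteliD_self_succ 3]
  ring

lemma bratteliD_four_one_add_three_odd (j : ℕ) :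
    bratteliD 4 1 (2 * j + 1) + bratteliD 4 3 (2 * j + 1) = 3 ^ j := by
  induction j with
  | zero => decide
  | succ j ih =>
    rw [show 2 * (j + 1) + 1 = 2 * j + 1 + 2 by ring, bratteliD_four_one_add_two,
      bratteliD_four_three_add_two, pow_succ, ← ih]
    ring

lemma bratteliD_four_one_odd_eq_three_odd_add_one (j : ℕ) :
    bratteliD 4 1 (2 * j + 1) = bratteliD 4 3 (2 * j + 1) + 1 := by
  induction j with
  | zero => decide
  | succ j ih =>
    rw [show 2 * (j + 1) + 1 = 2 * j + 1 + 2 by ring, bratteliD_four_one_add_two,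
      bratteliD_four_three_add_two]
    omega

lemma bratteliD_four_three_odd (j : ℕ) : bratteliD 4 3 (2 * j + 1) = (3 ^ j - 1) / 2 := by
  have := bratteliD_four_one_add_three_odd j
  have := bratteliD_four_one_odd_eq_three_odd_add_one j
  omega

theorem bratteliD_four_values (j : ℕ) :
    bratteliD 4 0 (2 * j + 2) = (3 ^ j + 1) / 2 ∧
    bratteliD 4 1 (2 * j + 1) = (3 ^ j + 1) / 2 ∧
    bratteliD 4 2 (2 * j + 2) = 3 ^ j ∧
    bratteliD 4 3 (2 * j + 3) = (3 ^ (j + 1) - 1) / 2 ∧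
    bratteliD 4 4 (2 * j + 4) = (3 ^ (j + 1) - 1) / 2 := by
  have hsum := bratteliD_four_one_add_three_odd j
  have hodd1 : bratteliD 4 1 (2 * j + 1) = (3 ^ j + 1) / 2 := by
    have := bratteliD_four_one_odd_eq_three_odd_add_one j
    omega
  have hodd3 : bratteliD 4 3 (2 * j + 3) = (3 ^ (j + 1) - 1) / 2 :=
    bratteliD_four_three_odd (j + 1)
  refine ⟨?_, hodd1, ?_, hodd3, ?_⟩
  · rw [bratteliD_zero_succ (by norm_num), hodd1]
  · rw [bratteliD_succ_succ (i := 1) (by norm_num), hsum]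
  · rw [bratteliD_self_succ 3, hodd3]
end
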